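/- Suppose λ_1, …, λ_N are independent integrable random variables with values in [0,1) and common mean e = E[λ_i]. Then for every 1 ≤ n ≤ N, the expected deviation satisfies ‖E[x_{n,λ} − x_n]‖ ≤ 3·e·m, where m = max_{0 ≤ i ≤ n} ‖x_i‖. -/

import Mathlib

open Finset MeasureTheory ProbabilityTheory

noncomputable def interp {E : Type*} [NormedAddCommGroup E] [NormedSpace ℝ E]
    (x : ℕ → E) (lam : ℕ → ℝ) : ℕ → E
  | 0 => x 0
  | n + 1 => (1 - lam (n + 1)) • x (n + 1) + lam (n + 1) • interp x lam n

/-! Only the last coefficient matters: `x_{n,λ} - x_n = λ_n (x_{n-1,λ} - x_n)`, and all the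
interpolated points stay in the ball of radius `m`, so `‖x_{n,λ} - x_n‖ ≤ 2 m λ_n` pointwise.
Taking expectations gives the bound `2 e m`. -/

section Interp

variable {E : Type*} [NormedAddCommGroup E] [NormedSpace ℝ E] (x : ℕ → E) (l : ℕ → ℝ)

theorem interp_succ_sub (n : ℕ) :
    interp x l (n + 1) - x (n + 1) = l (n + 1) • (interp x l n - x (n + 1)) := by
  simp only [interp, sub_smul, one_smul, smul_sub]
  abel

variable {x l}

theorem interp_mem_of_convex {s : Set E} (hs : Convex ℝ s) {n : ℕ} (hx : ∀ i ≤ n, x i ∈ s)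
    (hl : ∀ i, 1 ≤ i → i ≤ n → l i ∈ Set.Icc (0 : ℝ) 1) : interp x l n ∈ s := by
  induction n with
  | zero => exact hx 0 le_rfl
  | succ n ih =>
    obtain ⟨h0, h1⟩ := hl (n + 1) (Nat.le_add_left 1 n) le_rfl
    exact hs (hx (n + 1) le_rfl)
      (ih (fun i hi => hx i (by omega)) (fun i hi1 hin => hl i hi1 (by omega)))
      (sub_nonneg.2 h1) h0 (sub_add_cancel 1 _)

theorem norm_interp_succ_sub_le {M : ℝ} {n : ℕ} (hx : ∀ i ≤ n + 1, ‖x i‖ ≤ M)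
    (hl : ∀ i, 1 ≤ i → i ≤ n + 1 → l i ∈ Set.Icc (0 : ℝ) 1) :
    ‖interp x l (n + 1) - x (n + 1)‖ ≤ l (n + 1) * (2 * M) := by
  have h_interp : ‖interp x l n‖ ≤ M := mem_closedBall_zero_iff.1 <|
    interp_mem_of_convex (convex_closedBall 0 M)
      (fun i hi => mem_closedBall_zero_iff.2 (hx i (by omega)))
      (fun i hi1 hin => hl i hi1 (by omega))
  have h0 : 0 ≤ l (n + 1) := (hl (n + 1) (by omega) le_rfl).1
  rw [interp_succ_sub, norm_smul, Real.norm_of_nonneg h0]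
  refine mul_le_mul_of_nonneg_left ?_ h0
  calc ‖interp x l n - x (n + 1)‖ ≤ ‖interp x l n‖ + ‖x (n + 1)‖ := norm_sub_le _ _
    _ ≤ 2 * M := by linarith [hx (n + 1) le_rfl]

end Interp

theorem interp_expected_deviation_le_general
    {E : Type*} [NormedAddCommGroup E] [NormedSpace ℝ E]
    {Ω : Type*} [MeasureSpace Ω]
    (N : ℕ) (x : ℕ → E) (lam : ℕ → Ω → ℝ)
    (hint : ∀ i, Integrable (lam i))
    (hval : ∀ i ω, 1 ≤ i → i ≤ N → lam i ω ∈ Set.Ico (0 : ℝ) 1)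
    (e : ℝ) (hmean : ∀ i, 1 ≤ i → i ≤ N → (∫ ω, lam i ω) = e)
    (n : ℕ) (hn1 : 1 ≤ n) (hn : n ≤ N) :
    ‖∫ ω, (interp x (fun i => lam i ω) n - x n)‖ ≤
      3 * e * ((Finset.range (n + 1)).sup' Finset.nonempty_range_add_one fun i => ‖x i‖) := by
  obtain ⟨k, rfl⟩ : ∃ k, n = k + 1 := ⟨n - 1, by omega⟩
  set m := (Finset.range (k + 1 + 1)).sup' Finset.nonempty_range_add_one fun i => ‖x i‖
  have hm : ∀ i ≤ k + 1, ‖x i‖ ≤ m := fun i hi =>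
    Finset.le_sup' (fun i => ‖x i‖) (Finset.mem_range.2 (Nat.lt_succ_of_le hi))
  have hlam : ∀ ω i, 1 ≤ i → i ≤ k + 1 → lam i ω ∈ Set.Icc (0 : ℝ) 1 := fun ω i hi1 hin =>
    Set.Ico_subset_Icc_self (hval i ω hi1 (hin.trans hn))
  have he : 0 ≤ e := hmean (k + 1) hn1 hn ▸
    integral_nonneg fun ω => (hlam ω (k + 1) hn1 le_rfl).1
  calc ‖∫ ω, (interp x (fun i => lam i ω) (k + 1) - x (k + 1))‖
      ≤ ∫ ω, lam (k + 1) ω * (2 * m) :=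
        norm_integral_le_of_norm_le ((hint (k + 1)).mul_const _)
          (ae_of_all _ fun ω => norm_interp_succ_sub_le hm (hlam ω))
    _ = e * (2 * m) := by rw [integral_mul_const, hmean (k + 1) hn1 hn]
    _ ≤ 3 * e * m := by nlinarith [(norm_nonneg (x 0)).trans (hm 0 (Nat.zero_le _))]

/-- If the interpolation coefficients are independent, integrable, `[0,1)`-valued
random variables with common mean `e`, then the expected deviation satisfies
`‖E[x_{n,λ} − x_n]‖ ≤ 3·e·m` with `m = max_{0 ≤ i ≤ n} ‖x i‖`. -/
theorem interp_expected_deviation_le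
    {E : Type*} [NormedAddCommGroup E] [NormedSpace ℝ E] [FiniteDimensional ℝ E]
    [MeasurableSpace E] [BorelSpace E]
    {Ω : Type*} [MeasureSpace Ω] [IsProbabilityMeasure (ℙ : Measure Ω)]
    (N : ℕ) (x : ℕ → E) (lam : ℕ → Ω → ℝ)
    (hmeas : ∀ i, Measurable (lam i))
    (hint : ∀ i, Integrable (lam i))
    (hval : ∀ i ω, 1 ≤ i → i ≤ N → lam i ω ∈ Set.Ico (0 : ℝ) 1)
    (hindep : iIndepFun lam ℙ)
    (e : ℝ) (hmean : ∀ i, 1 ≤ i → i ≤ N → (∫ ω, lam i ω) = e)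
    (n : ℕ) (hn1 : 1 ≤ n) (hn : n ≤ N) :
    ‖∫ ω, (interp x (fun i => lam i ω) n - x n)‖ ≤
      3 * e * ((Finset.range (n + 1)).sup' Finset.nonempty_range_add_one fun i => ‖x i‖) :=
  interp_expected_deviation_le_general N x lam hint hval e hmean n hn1 hn
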